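/- arXiv:1811.09090 — 5 statements merged into one kernel-verified Lean document; each statement's English description precedes it below -/
import Mathlib

section
/- For every natural number n with n ≥ 3, there exists a natural number k such that k · ((n − 2) · π / n) = 2 · π if and only if n = 3, n = 4, or n = 6. (Equivalently: among regular polygons, exactly the equilateral triangle, the square and the regular hexagon have an interior angle fitting a whole number of times around a point, which is the arithmetic content of Aristotle's statement in On the Heavens that exactly these three regular figures tile the plane.) -/
/-!
Clearing denominators, `k` copies of the angle `(n - 2)π/n` make up `2π` exactly when
`k (n - 2) = 2n`, i.e. when `n - 2 ∣ 2n = 2(n - 2) + 4`, i.e. when `n - 2 ∣ 4`.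
-/

open Real

theorem mul_sub_two_mul_pi_div_eq_two_pi_iff {x : ℝ} (hx : x ≠ 0) (y : ℝ) :
    y * ((x - 2) * π / x) = 2 * π ↔ y * (x - 2) = 2 * x := by
  rw [show y * ((x - 2) * π / x) = y * (x - 2) / x * π by ring, mul_left_inj' pi_ne_zero,
    div_eq_iff hx]

theorem Nat.sub_dvd_mul_iff {m n : ℕ} (h : m ≤ n) (a : ℕ) : n - m ∣ a * n ↔ n - m ∣ a * m := by
  rw [show a * n = a * (n - m) + a * m by rw [← mul_add, Nat.sub_add_cancel h],
    Nat.dvd_add_right (dvd_mul_left _ _)]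

theorem Nat.sub_two_dvd_four_iff {n : ℕ} (hn : 3 ≤ n) : n - 2 ∣ 4 ↔ n = 3 ∨ n = 4 ∨ n = 6 := by
  constructor
  · intro hdvd
    have : n ≤ 6 := by have := Nat.le_of_dvd four_pos hdvd; omega
    interval_cases n <;> simp_all
  · rintro (rfl | rfl | rfl) <;> decide

/-- Among regular polygons (n ≥ 3), exactly for n = 3, 4, 6 does the interior
angle (n − 2)·π/n fit a whole number of times around a point (k copies sum to 2π). -/
theorem regular_polygon_angle_divides_two_pi (n : ℕ) (hn : 3 ≤ n) :
    (∃ k : ℕ, (k : ℝ) * (((n : ℝ) - 2) * Real.pi / n) = 2 * Real.pi) ↔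
      n = 3 ∨ n = 4 ∨ n = 6 := by
  have hn0 : (n : ℝ) ≠ 0 := by positivity
  calc (∃ k : ℕ, (k : ℝ) * (((n : ℝ) - 2) * π / n) = 2 * π)
      ↔ ∃ k : ℕ, k * (n - 2) = 2 * n := by
        refine exists_congr fun k => ?_
        rw [mul_sub_two_mul_pi_div_eq_two_pi_iff hn0, ← Nat.cast_ofNat (R := ℝ) (n := 2),
          ← Nat.cast_sub (by omega : 2 ≤ n)]
        norm_cast
    _ ↔ n - 2 ∣ 2 * n := by simp only [dvd_iff_exists_eq_mul_left, eq_comm]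
    _ ↔ n - 2 ∣ 4 := Nat.sub_dvd_mul_iff (by omega) 2
    _ ↔ n = 3 ∨ n = 4 ∨ n = 6 := Nat.sub_two_dvd_four_iff hn
end

section
/- Let r > 0 and c ≠ 0 be real numbers, and let h : ℝ → ℝł be the cylindrical helix h(t) = (r·cos t, r·sin t, c·t), with image H = {h(t) : t ∈ ℝ} in Euclidean 3-space. Then H is homeomerous: for all real numbers s and t there exists a surjective isometry φ of Euclidean 3-space such that φ maps H onto H and φ(h(s)) = h(t). -/
/-!
The screw motion about the `z`-axis that rotates by `θ` and translates by `c θ` maps `h u` to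
`h (u + θ)`. It therefore preserves the helix, and for `θ = t - s` it carries `h s` to `h t`.
-/

open Real Set

noncomputable def screwMotionFun (θ d : ℝ) (x : EuclideanSpace ℝ (Fin 3)) :
    EuclideanSpace ℝ (Fin 3) :=
  !₂[cos θ * x 0 - sin θ * x 1, sin θ * x 0 + cos θ * x 1, x 2 + d]

lemma screwMotionFun_neg_comp (θ d : ℝ) (x : EuclideanSpace ℝ (Fin 3)) :
    screwMotionFun (-θ) (-d) (screwMotionFun θ d x) = x := by
  ext i
  fin_cases i
  · simp [screwMotionFun]
    linear_combination x 0 * sin_sq_add_cos_sq θ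
  · simp [screwMotionFun]
    linear_combination x 1 * sin_sq_add_cos_sq θ
  · simp [screwMotionFun]

lemma dist_screwMotionFun (θ d : ℝ) (x y : EuclideanSpace ℝ (Fin 3)) :
    dist (screwMotionFun θ d x) (screwMotionFun θ d y) = dist x y := by
  simp only [EuclideanSpace.dist_eq, Fin.sum_univ_three, screwMotionFun, Real.dist_eq, sq_abs]
  congr 1
  simp only [Matrix.cons_val_zero, Matrix.cons_val_one, Matrix.cons_val_two, Matrix.head_cons,
    Matrix.tail_cons]
  linear_combination ((x 0 - y 0) ^ 2 + (x 1 - y 1) ^ 2) * sin_sq_add_cos_sq θ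

noncomputable def screwMotion (θ d : ℝ) :
    EuclideanSpace ℝ (Fin 3) ≃ᵢ EuclideanSpace ℝ (Fin 3) where
  toFun := screwMotionFun θ d
  invFun := screwMotionFun (-θ) (-d)
  left_inv := screwMotionFun_neg_comp θ d
  right_inv x := by simpa using screwMotionFun_neg_comp (-θ) (-d) x
  isometry_toFun := Isometry.of_dist_eq (dist_screwMotionFun θ d)

lemma screwMotion_helix {r c : ℝ} {h : ℝ → EuclideanSpace ℝ (Fin 3)}
    (hh : ∀ t : ℝ, h t = ![r * cos t, r * sin t, c * t]) (θ u : ℝ) :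
    screwMotion θ (c * θ) (h u) = h (u + θ) := by
  ext i
  fin_cases i <;> simp [screwMotion, screwMotionFun, hh, cos_add, sin_add] <;> ring

lemma image_range_eq_of_map_eq_shift {α β : Type*} [AddGroup α] {φ : β → β} {h : α → β} {a : α}
    (hφ : ∀ u, φ (h u) = h (u + a)) : φ '' range h = range h := by
  rw [← range_comp, ← (add_right_surjective a).range_comp h]
  exact congrArg range (funext hφ)

theorem cylindrical_helix_homeomerous_general (r c : ℝ)
    (h : ℝ → EuclideanSpace ℝ (Fin 3))
    (hh : ∀ t : ℝ, h t = ![r * Real.cos t, r * Real.sin t, c * t])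
    (H : Set (EuclideanSpace ℝ (Fin 3))) (hH : H = Set.range h) :
    ∀ s t : ℝ, ∃ φ : EuclideanSpace ℝ (Fin 3) ≃ᵢ EuclideanSpace ℝ (Fin 3),
      φ '' H = H ∧ φ (h s) = h t := by
  intro s t
  have shift := screwMotion_helix hh (t - s)
  refine ⟨screwMotion (t - s) (c * (t - s)), ?_, ?_⟩
  · rw [hH]
    exact image_range_eq_of_map_eq_shift shift
  · rw [shift, add_sub_cancel]

/-- The cylindrical helix is homeomerous: any point of it can be carried to any
other point by a surjective isometry of Euclidean 3-space preserving the helix. -/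
theorem cylindrical_helix_homeomerous (r c : ℝ) (hr : 0 < r) (hc : c ≠ 0)
    (h : ℝ → EuclideanSpace ℝ (Fin 3))
    (hh : ∀ t : ℝ, h t = ![r * Real.cos t, r * Real.sin t, c * t])
    (H : Set (EuclideanSpace ℝ (Fin 3))) (hH : H = Set.range h) :
    ∀ s t : ℝ, ∃ φ : EuclideanSpace ℝ (Fin 3) ≃ᵢ EuclideanSpace ℝ (Fin 3),
      φ '' H = H ∧ φ (h s) = h t :=
  cylindrical_helix_homeomerous_general r c h hh H hH
end

section
/- Let a > 0 and let S = {(a·θ·cos θ, a·θ·sin θ) : θ ∈ [0, ∞)} be the Archimedean spiral in the Euclidean plane. Then every surjective isometry φ of the Euclidean plane satisfying φ(S) = S fixes every point of S. In particular, since S has more than one point, S is not homeomerous. -/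
/-!
On the spiral `γ θ = (aθ cos θ, aθ sin θ)`, `θ ≥ 0`, the norm is `aθ`, so a point of the spiral is
determined by its distance to the origin; an isometry preserving the spiral and fixing the origin
therefore fixes the spiral pointwise. The origin is fixed: if `φ (γ t) = 0`, then
`θ ↦ ‖φ (γ θ)‖` is continuous and injective on `[0, ∞)`, hence strictly monotone on every compact
subinterval, and it attains its minimum at `t`; this forces `t = 0`.
-/

open Set

section

variable {α δ : Type*} [ConditionallyCompleteLinearOrder α] [TopologicalSpace α] [OrderTopology α]
  [DenselyOrdered α] [NoMaxOrder α] [LinearOrder δ] [TopologicalSpace δ] [OrderClosedTopology δ]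

theorem ContinuousOn.eq_of_injOn_Ici_of_isMinOn {a t : α} {f : α → δ}
    (hf : ContinuousOn f (Ici a)) (hinj : InjOn f (Ici a)) (ht : t ∈ Ici a)
    (hmin : IsMinOn f (Ici a) t) : t = a := by
  by_contra hne
  have hat : a < t := lt_of_le_of_ne ht (Ne.symm hne)
  obtain ⟨b, htb⟩ := exists_gt t
  have hab : a ≤ b := hat.le.trans htb.le
  have hsub : Icc a b ⊆ Ici a := Icc_subset_Ici_self
  have htab : t ∈ Icc a b := ⟨hat.le, htb.le⟩
  rcases (hf.mono hsub).strictMonoOn_of_injOn_Icc' hab (hinj.mono hsub) with hmono | hanti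
  · exact (hmono ⟨le_rfl, hab⟩ htab hat).not_ge (isMinOn_iff.mp hmin a self_mem_Ici)
  · exact (hanti htab ⟨hab, le_rfl⟩ htb).not_ge (isMinOn_iff.mp hmin b hab)

end

section

variable {E : Type*} [SeminormedAddCommGroup E] {γ : ℝ → E}

theorem injOn_norm_image_Ici (hγ : StrictMonoOn (‖γ ·‖) (Ici 0)) : InjOn norm (γ '' Ici 0) := by
  rintro _ ⟨s, hs, rfl⟩ _ ⟨t, ht, rfl⟩ h
  rw [hγ.injOn hs ht h]

namespace IsometryEquiv

theorem apply_zero_of_image_eq (hγc : Continuous γ) (hγ0 : γ 0 = 0)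
    (hγ : StrictMonoOn (‖γ ·‖) (Ici 0)) {φ : E ≃ᵢ E} (hφ : φ '' (γ '' Ici 0) = γ '' Ici 0) :
    φ 0 = 0 := by
  obtain ⟨t, ht, hφt⟩ : ∃ t ∈ Ici (0 : ℝ), φ (γ t) = 0 := by
    obtain ⟨_, ⟨t, ht, rfl⟩, h⟩ : (0 : E) ∈ φ '' (γ '' Ici 0) := by
      rw [hφ]; exact ⟨0, self_mem_Ici, hγ0⟩
    exact ⟨t, ht, h⟩
  have hmaps : MapsTo (φ ∘ γ) (Ici 0) (γ '' Ici 0) := fun s hs ↦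
    hφ ▸ mem_image_of_mem φ (mem_image_of_mem γ hs)
  have hinj : InjOn (fun s ↦ ‖φ (γ s)‖) (Ici 0) :=
    (injOn_norm_image_Ici hγ).comp (φ.injective.comp_injOn hγ.injOn.of_comp) hmaps
  have hmin : IsMinOn (fun s ↦ ‖φ (γ s)‖) (Ici 0) t :=
    isMinOn_iff.mpr fun s _ ↦ by simp only [hφt, norm_zero, norm_nonneg]
  have ht0 : t = 0 :=
    (φ.continuous.comp hγc).norm.continuousOn.eq_of_injOn_Ici_of_isMinOn hinj ht hmin
  rwa [ht0, hγ0] at hφt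

theorem apply_eq_self_of_image_eq (hγc : Continuous γ) (hγ0 : γ 0 = 0)
    (hγ : StrictMonoOn (‖γ ·‖) (Ici 0)) {φ : E ≃ᵢ E} (hφ : φ '' (γ '' Ici 0) = γ '' Ici 0) :
    ∀ p ∈ γ '' Ici 0, φ p = p := by
  intro p hp
  have hnorm : ‖φ p‖ = ‖p‖ := by
    rw [← dist_zero_right, ← apply_zero_of_image_eq hγc hγ0 hγ hφ, φ.dist_eq, dist_zero_right]
  exact injOn_norm_image_Ici hγ (hφ ▸ mem_image_of_mem φ hp) hp hnorm

end IsometryEquiv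

end

def IsHomeomerous {E : Type*} [PseudoMetricSpace E] (S : Set E) : Prop :=
  ∀ p ∈ S, ∀ q ∈ S, ∃ φ : E ≃ᵢ E, φ '' S = S ∧ φ p = q

theorem not_isHomeomerous_of_forall_apply_eq_self {E : Type*} [PseudoMetricSpace E] {S : Set E}
    (hfix : ∀ φ : E ≃ᵢ E, φ '' S = S → ∀ p ∈ S, φ p = p) {p q : E} (hp : p ∈ S) (hq : q ∈ S)
    (hpq : p ≠ q) : ¬ IsHomeomerous S := fun h ↦
  let ⟨φ, hφS, hφp⟩ := h p hp q hq
  hpq (hfix φ hφS p hp ▸ hφp)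

noncomputable def archimedeanSpiral (a θ : ℝ) : EuclideanSpace ℝ (Fin 2) :=
  WithLp.toLp 2 ![a * θ * Real.cos θ, a * θ * Real.sin θ]

theorem norm_archimedeanSpiral (a θ : ℝ) : ‖archimedeanSpiral a θ‖ = |a * θ| := by
  rw [EuclideanSpace.norm_eq, ← Real.sqrt_sq_eq_abs]
  congr 1
  simp only [archimedeanSpiral, Fin.sum_univ_two, Matrix.cons_val_zero, Matrix.cons_val_one,
    Real.norm_eq_abs, sq_abs]
  linear_combination (a * θ) ^ 2 * Real.cos_sq_add_sin_sq θ

theorem continuous_archimedeanSpiral (a : ℝ) : Continuous (archimedeanSpiral a) :=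
  (PiLp.continuous_toLp 2 _).comp <| continuous_pi fun i ↦ by
    fin_cases i <;> simp only [Fin.zero_eta, Fin.mk_one, Matrix.cons_val_zero,
      Matrix.cons_val_one] <;> fun_prop

theorem archimedeanSpiral_zero (a : ℝ) : archimedeanSpiral a 0 = 0 := by
  ext i; fin_cases i <;> simp [archimedeanSpiral]

theorem strictMonoOn_norm_archimedeanSpiral {a : ℝ} (ha : 0 < a) :
    StrictMonoOn (‖archimedeanSpiral a ·‖) (Ici 0) := fun s hs t ht hst ↦ by
  simp only [norm_archimedeanSpiral, abs_of_nonneg (mul_nonneg ha.le (mem_Ici.mp hs)),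
    abs_of_nonneg (mul_nonneg ha.le (mem_Ici.mp ht))]
  exact mul_lt_mul_of_pos_left hst ha

/-- Every surjective isometry of the Euclidean plane preserving the Archimedean
spiral fixes it pointwise; in particular the spiral is not homeomerous. -/
theorem archimedean_spiral_not_homeomerous (a : ℝ) (ha : 0 < a)
    (S : Set (EuclideanSpace ℝ (Fin 2)))
    (hS : S = {p | ∃ θ : ℝ, 0 ≤ θ ∧
      p = WithLp.toLp 2 ![a * θ * Real.cos θ, a * θ * Real.sin θ]}) :
    (∀ φ : EuclideanSpace ℝ (Fin 2) ≃ᵢ EuclideanSpace ℝ (Fin 2),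
        φ '' S = S → ∀ p ∈ S, φ p = p) ∧
      ¬ (∀ p ∈ S, ∀ q ∈ S,
          ∃ φ : EuclideanSpace ℝ (Fin 2) ≃ᵢ EuclideanSpace ℝ (Fin 2),
            φ '' S = S ∧ φ p = q) := by
  obtain rfl : S = archimedeanSpiral a '' Ici 0 := by
    rw [hS]; ext p; simp only [mem_ofPred_eq, mem_image, mem_Ici, eq_comm (a := p)]; rfl
  have hfix (φ : EuclideanSpace ℝ (Fin 2) ≃ᵢ EuclideanSpace ℝ (Fin 2))
      (hφ : φ '' (archimedeanSpiral a '' Ici 0) = archimedeanSpiral a '' Ici 0) :=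
    IsometryEquiv.apply_eq_self_of_image_eq (continuous_archimedeanSpiral a)
      (archimedeanSpiral_zero a) (strictMonoOn_norm_archimedeanSpiral ha) hφ
  have hne : archimedeanSpiral a 0 ≠ archimedeanSpiral a 1 := fun h ↦ by
    simpa [norm_archimedeanSpiral, abs_of_pos ha, ha.ne] using congrArg norm h
  exact ⟨hfix, not_isHomeomerous_of_forall_apply_eq_self hfix (mem_image_of_mem _ self_mem_Ici)
    (mem_image_of_mem _ (mem_Ici.mpr zero_le_one)) hne⟩
end

section
/- Let φ : ℝ → Isom(ℝł) be a one-parameter group of isometries of Euclidean 3-space, i.e. φ(0) is the identity, φ(s + t) = φ(s) ∘ φ(t) for all s, t ∈ ℝ, and the map (t, x) ↦ φ(t)(x) is continuous. Then for every point x of Euclidean 3-space there exist a real number r ≥ 0, a real number c, and a surjective isometry ψ of Euclidean 3-space such that the orbit {φ(t)(x) : t ∈ ℝ} equals ψ '' {(r·cos t, r·sin t, c·t) : t ∈ ℝ}. In particular every such orbit is a single point, a straight line, a circle, or a cylindrical helix. -/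
/-!
An isometry of a real normed space is affine (Mazur–Ulam), so `φ t y = A t y + φ t 0` with `A t`
linear and continuous in `t`. For small `h > 0` the average `C = ∫₀ʰ A` is invertible, and
integrating the group law gives `φ t y = C⁻¹ (∫ₜ^{t+h} φ s y ds - const)`; hence every orbit is
`C¹` and solves `γ' = K γ + v`, where `K` is skew because the flow preserves distances.
In dimension 3 a skew `K` kills an axis `e` and rotates `e^⊥` with some angular velocity `ω`.
An explicit screw motion about a suitable parallel to `e` solves the same equation through `x`,
so by uniqueness it is the orbit, and it is an isometric image of the standard helix.
-/

open scoped RealInnerProductSpace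
open Module Filter Topology

theorem exists_pos_isUnit_intervalIntegral {A : Type*} [NormedRing A] [NormedAlgebra ℝ A]
    [CompleteSpace A] {f : ℝ → A} (hf : Continuous f) (hf0 : f 0 = 1) :
    ∃ h > 0, IsUnit (∫ s in (0 : ℝ)..h, f s) := by
  have hslope : Tendsto (fun h : ℝ => h⁻¹ • ∫ s in (0 : ℝ)..h, f s) (𝓝[>] 0) (𝓝 1) := by
    simpa [hf0] using (hf.integral_hasStrictDerivAt 0 0).hasDerivAt.tendsto_slope_zero_right
  obtain ⟨h, hunit, hpos⟩ := ((hslope.eventually (Units.isOpen.mem_nhds isUnit_one)).and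
    self_mem_nhdsWithin).exists
  refine ⟨h, hpos, ?_⟩
  have : IsUnit (algebraMap ℝ A h) := (isUnit_iff_ne_zero.2 hpos.ne').map _
  simpa [← Algebra.smul_def, smul_smul, hpos.ne'] using this.mul hunit

section Flow

variable {E : Type*} [NormedAddCommGroup E] [NormedSpace ℝ E] [FiniteDimensional ℝ E]
  {φ : ℝ → E ≃ᵢ E}

theorem continuous_toRealLinearIsometryEquiv_of_continuous_uncurry
    (hcont : Continuous fun p : ℝ × E => φ p.1 p.2) :
    Continuous fun t => ((φ t).toRealLinearIsometryEquiv : E →L[ℝ] E) := by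
  refine continuous_clm_apply.2 fun y => ?_
  simp only [LinearIsometryEquiv.coe_coe'', IsometryEquiv.toRealLinearIsometryEquiv_apply]
  exact (hcont.comp (continuous_id.prodMk continuous_const)).sub
    (hcont.comp (continuous_id.prodMk continuous_const))

/-- The group law `φ (t + s) y = A s (φ t y) + φ s 0`, with `A s` the linear part of `φ s`,
integrated over `s ∈ [0, h]`. -/
theorem intervalIntegral_flow_eq (hadd : ∀ s t x, φ (s + t) x = φ s (φ t x))
    (hcont : Continuous fun p : ℝ × E => φ p.1 p.2) (h t : ℝ) (y : E) :
    ∫ s in t..t + h, φ s y =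
      (∫ s in (0 : ℝ)..h, ((φ s).toRealLinearIsometryEquiv : E →L[ℝ] E)) (φ t y) +
        ∫ s in (0 : ℝ)..h, φ s 0 := by
  have hA := continuous_toRealLinearIsometryEquiv_of_continuous_uncurry hcont
  have horbit : ∀ z, Continuous fun s => φ s z := fun z =>
    hcont.comp (continuous_id.prodMk continuous_const)
  rw [ContinuousLinearMap.intervalIntegral_apply (hA.intervalIntegrable 0 h),
    ← intervalIntegral.integral_add ((hA.clm_apply continuous_const).intervalIntegrable 0 h)
      ((horbit 0).intervalIntegrable 0 h)]
  have hshift := intervalIntegral.integral_comp_add_right (fun s => φ s y) t (a := 0) (b := h)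
  rw [zero_add, add_comm h] at hshift
  rw [← hshift]
  congr 1 with s
  simp [hadd]

theorem exists_hasDerivAt_flow (h0 : φ 0 = IsometryEquiv.refl E)
    (hadd : ∀ s t x, φ (s + t) x = φ s (φ t x))
    (hcont : Continuous fun p : ℝ × E => φ p.1 p.2) :
    ∃ (K : E →L[ℝ] E) (v : E), ∀ y t, HasDerivAt (fun s => φ s y) (K (φ t y) + v) t := by
  have hA0 : ((φ 0).toRealLinearIsometryEquiv : E →L[ℝ] E) = 1 := by
    ext y
    simp only [h0, LinearIsometryEquiv.coe_coe'', IsometryEquiv.toRealLinearIsometryEquiv_apply,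
      one_apply_eq_self]
    exact sub_zero y
  obtain ⟨h, -, ⟨C, hC⟩⟩ := exists_pos_isUnit_intervalIntegral
    (continuous_toRealLinearIsometryEquiv_of_continuous_uncurry hcont) hA0
  refine ⟨C⁻¹.val * ((φ h).toRealLinearIsometryEquiv - 1), C⁻¹.val (φ h 0), fun y t => ?_⟩
  have horbit : Continuous fun s => φ s y := hcont.comp (continuous_id.prodMk continuous_const)
  have hrepr : (fun s => φ s y) = fun s =>
      C⁻¹.val ((∫ u in s..s + h, φ u y) - ∫ u in (0 : ℝ)..h, φ u 0) := by
    ext s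
    rw [intervalIntegral_flow_eq hadd hcont, ← hC, add_sub_cancel_right, ← mul_apply_eq_comp,
      Units.inv_mul, one_apply_eq_self]
  have hmoving : HasDerivAt (fun s => ∫ u in s..s + h, φ u y) (φ (t + h) y - φ t y) t := by
    have hF := fun a => (horbit.integral_hasStrictDerivAt 0 a).hasDerivAt
    have := ((hF (t + h)).scomp t ((hasDerivAt_id t).add_const h)).sub (hF t)
    refine (this.congr_of_eventuallyEq (Eventually.of_forall fun s => ?_)).congr_deriv (by simp)
    simp [intervalIntegral.integral_interval_sub_left (horbit.intervalIntegrable _ _)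
      (horbit.intervalIntegrable _ _)]
  have hvalue : C⁻¹.val (φ (t + h) y - φ t y) =
      (C⁻¹.val * ((φ h).toRealLinearIsometryEquiv - 1)) (φ t y) + C⁻¹.val (φ h 0) := by
    rw [add_comm t h, hadd h t]
    simp only [mul_apply_eq_comp, sub_apply, one_apply_eq_self, LinearIsometryEquiv.coe_coe'',
      IsometryEquiv.toRealLinearIsometryEquiv_apply, ← map_add]
    abel_nf
  rw [hrepr, ← hvalue]
  exact C⁻¹.val.hasFDerivAt.comp_hasDerivAt t (hmoving.sub_const _)

end Flow

section NormedSpace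

variable {E : Type*} [NormedAddCommGroup E] [NormedSpace ℝ E]

theorem ODE_solution_unique_affine (K : E →L[ℝ] E) (v : E) {γ₁ γ₂ : ℝ → E}
    (h₁ : ∀ t, HasDerivAt γ₁ (K (γ₁ t) + v) t) (h₂ : ∀ t, HasDerivAt γ₂ (K (γ₂ t) + v) t)
    (h0 : γ₁ 0 = γ₂ 0) : γ₁ = γ₂ :=
  ODE_solution_unique_univ (v := fun _ z => K z + v) (s := fun _ => Set.univ)
    (fun _ => (K.lipschitz.add (LipschitzWith.const v)).lipschitzOnWith) (fun t => ⟨h₁ t, trivial⟩)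
    (fun t => ⟨h₂ t, trivial⟩) h0

noncomputable def screwCurve (X₀ p q w : E) (ω t : ℝ) : E :=
  X₀ + Real.cos (ω * t) • p + Real.sin (ω * t) • q + t • w

theorem hasDerivAt_screwCurve {K : E →L[ℝ] E} {X₀ p q w v : E} {ω : ℝ} (hp : K p = ω • q)
    (hq : K q = -ω • p) (hw : K w = 0) (hX₀ : K X₀ + v = w) (t : ℝ) :
    HasDerivAt (screwCurve X₀ p q w ω) (K (screwCurve X₀ p q w ω t) + v) t := by
  have hθ : HasDerivAt (fun t => ω * t) ω t := by simpa using (hasDerivAt_id t).const_mul ω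
  convert (((hθ.cos.smul_const p).const_add X₀).add (hθ.sin.smul_const q)).add
    ((hasDerivAt_id t).smul_const w) using 1
  · rfl
  · nth_rewrite 2 [← hX₀]
    simp only [screwCurve, map_add, map_smul, hp, hq, hw, one_smul]
    module

end NormedSpace

section InnerProduct

variable {E : Type*} [NormedAddCommGroup E] [InnerProductSpace ℝ E]

theorem inner_apply_eq_neg_inner_apply_of_skew {K : E →L[ℝ] E} (hK : ∀ w, ⟪K w, w⟫ = 0)
    (x y : E) : ⟪K x, y⟫ = -⟪x, K y⟫ := by
  have h := hK (x + y)
  simp only [map_add, inner_add_left, inner_add_right, hK, real_inner_comm x (K y)] at h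
  linarith

theorem inner_apply_self_eq_zero_of_isometry_flow {φ : ℝ → E ≃ᵢ E}
    (h0 : φ 0 = IsometryEquiv.refl E) {K : E →L[ℝ] E} {v : E}
    (hderiv : ∀ y t, HasDerivAt (fun s => φ s y) (K (φ t y) + v) t) (w : E) :
    ⟪K w, w⟫ = 0 := by
  have hconst : (fun s => ‖φ s w - φ s 0‖ ^ 2) = fun _ => ‖w‖ ^ 2 := by
    ext s
    rw [← dist_eq_norm, IsometryEquiv.dist_eq, dist_zero_right]
  have hd := ((hderiv w 0).sub (hderiv 0 0)).norm_sq
  have hφ0 (y : E) : φ 0 y = y := by rw [h0]; rfl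
  simp only [Pi.sub_apply, hconst, hφ0, add_sub_add_right_eq_sub, map_zero, sub_zero] at hd
  have := hd.unique (hasDerivAt_const 0 _)
  rw [real_inner_comm]
  linarith

theorem exists_ne_zero_apply_eq_zero_of_skew [FiniteDimensional ℝ E]
    (hodd : Odd (finrank ℝ E)) {K : E →L[ℝ] E} (hK : ∀ w, ⟪K w, w⟫ = 0) :
    ∃ e ≠ 0, K e = 0 := by
  have hadj : LinearMap.adjoint (K : E →ₗ[ℝ] E) = -K := by
    symm
    rw [LinearMap.eq_adjoint_iff]
    intro x y
    simp [inner_apply_eq_neg_inner_apply_of_skew hK]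
  have hdet : LinearMap.det (K : E →ₗ[ℝ] E) = 0 := by
    let b := stdOrthonormalBasis ℝ E
    have h := congrArg Matrix.det (LinearMap.toMatrix_adjoint b b (K : E →ₗ[ℝ] E))
    rw [hadj, Matrix.det_conjTranspose, LinearMap.det_toMatrix, LinearMap.det_toMatrix,
      ← neg_one_smul ℝ, LinearMap.det_smul, hodd.neg_one_pow] at h
    rw [star_trivial] at h
    linarith
  obtain ⟨e, he, hne⟩ := Submodule.exists_mem_ne_zero_of_ne_bot
    (LinearMap.det_eq_zero_iff_ker_ne_bot.1 hdet)
  exact ⟨e, hne, he⟩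

theorem exists_norm_eq_one_mem_and_eq_norm_smul {W : Submodule ℝ E} (hW : W ≠ ⊥) {y : E}
    (hy : y ∈ W) : ∃ u ∈ W, ‖u‖ = 1 ∧ y = ‖y‖ • u := by
  by_cases hy0 : y = 0
  · obtain ⟨w, hw, hw0⟩ := Submodule.exists_mem_ne_zero_of_ne_bot hW
    exact ⟨‖w‖⁻¹ • w, W.smul_mem _ hw, norm_smul_inv_norm hw0, by simp [hy0]⟩
  · exact ⟨‖y‖⁻¹ • y, W.smul_mem _ hy, norm_smul_inv_norm hy0,
      by rw [smul_inv_smul₀ (norm_ne_zero_iff.2 hy0)]⟩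

theorem exists_orthonormalBasis_fin_three_eq_zero_eq_two (h3 : finrank ℝ E = 3) {u e : E}
    (hu : ‖u‖ = 1) (he : ‖e‖ = 1) (hue : ⟪u, e⟫ = 0) :
    ∃ b : OrthonormalBasis (Fin 3) ℝ E, b 0 = u ∧ b 2 = e := by
  have : FiniteDimensional ℝ E := .of_finrank_eq_succ h3
  have hon : Orthonormal ℝ (({0, 2} : Set (Fin 3)).domRestrict ![u, u, e]) := by
    rw [orthonormal_iff_ite]
    rintro ⟨i, hi⟩ ⟨j, hj⟩
    simp only [Set.mem_insert_iff, Set.mem_singleton_iff] at hi hj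
    rcases hi with rfl | rfl <;> rcases hj with rfl | rfl <;>
      simp [Set.domRestrict_apply, hu, he, hue, real_inner_comm u e]
  obtain ⟨b, hb⟩ := hon.exists_orthonormalBasis_extension_of_card_eq (by simp [h3])
  exact ⟨b, hb 0 (by simp), hb 2 (by simp)⟩

theorem exists_orthonormalBasis_fin_three_eq_two (h3 : finrank ℝ E = 3) {e : E}
    (he : ‖e‖ = 1) : ∃ b : OrthonormalBasis (Fin 3) ℝ E, b 2 = e := by
  have : FiniteDimensional ℝ E := .of_finrank_eq_succ h3
  obtain ⟨b, hb⟩ := Orthonormal.exists_orthonormalBasis_extension_of_card_eq (𝕜 := ℝ)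
    (by simp [h3]) (v := fun _ : Fin 3 => e) (s := {2})
    ⟨fun _ => he, fun i j hij => absurd (Subsingleton.elim i j) hij⟩
  exact ⟨b, hb 2 rfl⟩

theorem OrthonormalBasis.sum_repr'_fin_three (b : OrthonormalBasis (Fin 3) ℝ E) (x : E) :
    ⟪b 0, x⟫ • b 0 + ⟪b 1, x⟫ • b 1 + ⟪b 2, x⟫ • b 2 = x := by
  simpa [Fin.sum_univ_three] using b.sum_repr' x

/-- `⟪b 0, z⟫ • b 1 - ⟪b 1, z⟫ • b 0` is the infinitesimal rotation of `z` about the axis `b 2`. -/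
theorem skew_apply_eq_of_apply_two_eq_zero {K : E →L[ℝ] E} (hK : ∀ w, ⟪K w, w⟫ = 0)
    (b : OrthonormalBasis (Fin 3) ℝ E) (hb : K (b 2) = 0) (z : E) :
    K z = ⟪b 1, K (b 0)⟫ • (⟪b 0, z⟫ • b 1 - ⟪b 1, z⟫ • b 0) := by
  have hexp (x : E) := (b.sum_repr'_fin_three x).symm
  have hskew := inner_apply_eq_neg_inner_apply_of_skew hK
  have hdiag (i : Fin 3) : ⟪b i, K (b i)⟫ = 0 := by rw [real_inner_comm]; exact hK _
  set ω := ⟪b 1, K (b 0)⟫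
  have hKb0 : K (b 0) = ω • b 1 := by
    have h20 : ⟪b 2, K (b 0)⟫ = 0 := by simpa [hb] using hskew (b 2) (b 0)
    simpa [hdiag, h20] using hexp (K (b 0))
  have hKb1 : K (b 1) = -ω • b 0 := by
    have h21 : ⟪b 2, K (b 1)⟫ = 0 := by simpa [hb] using hskew (b 2) (b 1)
    have h01 : ⟪b 0, K (b 1)⟫ = -ω := by
      rw [← neg_eq_iff_eq_neg, ← hskew, real_inner_comm]
    simpa [hdiag, h21, h01] using hexp (K (b 1))
  conv_lhs => rw [hexp z]
  simp only [map_add, map_smul, hKb0, hKb1, hb]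
  module

theorem exists_orthonormalBasis_skew_apply_eq {K : E →L[ℝ] E} (hK : ∀ w, ⟪K w, w⟫ = 0)
    (hK0 : K ≠ 0) (h3 : finrank ℝ E = 3) {u e : E} (hu : ‖u‖ = 1) (he : ‖e‖ = 1)
    (hue : ⟪u, e⟫ = 0) (hKe : K e = 0) :
    ∃ (b : OrthonormalBasis (Fin 3) ℝ E) (ω : ℝ), ω ≠ 0 ∧ b 0 = u ∧ b 2 = e ∧
      ∀ z, K z = ω • (⟪b 0, z⟫ • b 1 - ⟪b 1, z⟫ • b 0) := by
  obtain ⟨b, hb0, hb2⟩ := exists_orthonormalBasis_fin_three_eq_zero_eq_two h3 hu he hue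
  have hN := skew_apply_eq_of_apply_two_eq_zero hK b (hb2 ▸ hKe)
  refine ⟨b, _, fun hω => hK0 ?_, hb0, hb2, hN⟩
  ext z
  simp [hN z, hω]

theorem orthogonal_span_singleton_ne_bot {n : ℕ} (hn : finrank ℝ E = n + 2) {e : E}
    (he : e ≠ 0) : (ℝ ∙ e)ᗮ ≠ ⊥ := by
  have : Fact (finrank ℝ E = n + 1 + 1) := ⟨hn⟩
  have : FiniteDimensional ℝ E := .of_fact_finrank_eq_succ (n + 1)
  rw [ne_eq, ← Submodule.finrank_eq_zero,
    Submodule.finrank_orthogonal_span_singleton (n := n + 1) he]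
  exact n.succ_ne_zero

/-- The points `X` with `K X + v ∈ ℝ ∙ e` form the axis of the screw motion `γ' = K γ + v`. -/
theorem exists_apply_add_eq_inner_smul_of_skew (h3 : finrank ℝ E = 3) {K : E →L[ℝ] E}
    (hK : ∀ w, ⟪K w, w⟫ = 0) (hK0 : K ≠ 0) {e : E} (he : ‖e‖ = 1) (hKe : K e = 0) (v : E) :
    ∃ X, K X + v = ⟪e, v⟫ • e := by
  obtain ⟨u, hu, hu1, -⟩ := exists_norm_eq_one_mem_and_eq_norm_smul
    (orthogonal_span_singleton_ne_bot (n := 1) h3 (norm_ne_zero_iff.1 (he ▸ one_ne_zero)))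
    (zero_mem _)
  obtain ⟨b, ω, hω, -, rfl, hN⟩ := exists_orthonormalBasis_skew_apply_eq hK hK0 h3 hu1 he
    (Submodule.mem_orthogonal_singleton_iff_inner_left.1 hu) hKe
  refine ⟨ω⁻¹ • (⟪b 0, v⟫ • b 1 - ⟪b 1, v⟫ • b 0), ?_⟩
  rw [hN]
  simp [inner_sub_right, inner_smul_right, b.inner_eq_ite, smul_sub, smul_smul,
    mul_inv_cancel_left₀ hω]
  linear_combination (norm := module) (b.sum_repr'_fin_three v).symm

theorem exists_screwCurve_solution (h3 : finrank ℝ E = 3) {K : E →L[ℝ] E}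
    (hK : ∀ w, ⟪K w, w⟫ = 0) (x v : E) :
    ∃ (b : OrthonormalBasis (Fin 3) ℝ E) (X₀ : E) (r c ω : ℝ), 0 ≤ r ∧ ω ≠ 0 ∧
      screwCurve X₀ (r • b 0) (r • b 1) (c • b 2) ω 0 = x ∧
      ∀ t, HasDerivAt (screwCurve X₀ (r • b 0) (r • b 1) (c • b 2) ω)
        (K (screwCurve X₀ (r • b 0) (r • b 1) (c • b 2) ω t) + v) t := by
  have : FiniteDimensional ℝ E := .of_finrank_eq_succ h3
  by_cases hK0 : K = 0
  · have : Nontrivial E := nontrivial_of_finrank_eq_succ h3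
    obtain ⟨e, -, he, hve⟩ :=
      exists_norm_eq_one_mem_and_eq_norm_smul (W := ⊤) top_ne_bot (Submodule.mem_top (x := v))
    obtain ⟨b, hb⟩ := exists_orthonormalBasis_fin_three_eq_two h3 he
    refine ⟨b, x, 0, ‖v‖, 1, le_rfl, one_ne_zero, by simp [screwCurve], fun t =>
      hasDerivAt_screwCurve (by simp [hK0]) (by simp [hK0]) (by simp [hK0]) ?_ t⟩
    simp [hK0, hb, ← hve]
  obtain ⟨e₀, he₀, hKe₀⟩ := exists_ne_zero_apply_eq_zero_of_skew (by rw [h3]; exact ⟨1, rfl⟩) hK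
  set e := ‖e₀‖⁻¹ • e₀
  have he : ‖e‖ = 1 := norm_smul_inv_norm he₀
  have hKe : K e = 0 := by simp [e, hKe₀]
  obtain ⟨X₁, hX₁⟩ := exists_apply_add_eq_inner_smul_of_skew h3 hK hK0 he hKe v
  -- the foot of the perpendicular from `x` to the axis
  set X₀ := X₁ + ⟪e, x - X₁⟫ • e
  have hX₀ : K X₀ + v = ⟪e, v⟫ • e := by simp [X₀, hKe, ← hX₁]
  have hy : x - X₀ ∈ (ℝ ∙ e)ᗮ := by
    rw [Submodule.mem_orthogonal_singleton_iff_inner_right]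
    simp [X₀, inner_sub_right, inner_add_right, inner_smul_right, he]
  obtain ⟨u, hu, hu1, hxu⟩ := exists_norm_eq_one_mem_and_eq_norm_smul
    (orthogonal_span_singleton_ne_bot (n := 1) h3 (norm_ne_zero_iff.1 (he ▸ one_ne_zero))) hy
  obtain ⟨b, ω, hω, hb0, hb2, hN⟩ := exists_orthonormalBasis_skew_apply_eq hK hK0 h3 hu1 he
    (Submodule.mem_orthogonal_singleton_iff_inner_left.1 hu) hKe
  refine ⟨b, X₀, ‖x - X₀‖, ⟪e, v⟫, ω, norm_nonneg _, hω, ?_, fun t =>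
    hasDerivAt_screwCurve ?_ ?_ ?_ (hb2 ▸ hX₀) t⟩
  · simp [screwCurve, hb0, ← hxu]
  · simp [hN, inner_smul_right, b.inner_eq_ite, smul_smul]
  · simp [hN, inner_smul_right, b.inner_eq_ite, smul_smul]
  · simp [hb2, hKe]

noncomputable def helix (r c t : ℝ) : EuclideanSpace ℝ (Fin 3) :=
  WithLp.toLp 2 ![r * Real.cos t, r * Real.sin t, c * t]

theorem exists_isometryEquiv_range_screwCurve_eq_image_range_helix
    (b : OrthonormalBasis (Fin 3) ℝ E) (X₀ : E) (r c : ℝ) {ω : ℝ} (hω : ω ≠ 0) :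
    ∃ ψ : EuclideanSpace ℝ (Fin 3) ≃ᵢ E,
      Set.range (screwCurve X₀ (r • b 0) (r • b 1) (c • b 2) ω) =
        ψ '' Set.range (helix r (c / ω)) := by
  let ψ := b.repr.symm.toIsometryEquiv.trans (IsometryEquiv.addLeft X₀)
  have hcurve : screwCurve X₀ (r • b 0) (r • b 1) (c • b 2) ω = ψ ∘ helix r (c / ω) ∘ (ω * ·) := by
    ext1 t
    simp [ψ, screwCurve, helix, ← b.sum_repr_symm, Fin.sum_univ_three, smul_smul]
    rw [show c / ω * (ω * t) = t * c by field_simp]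
    module
  refine ⟨ψ, ?_⟩
  rw [hcurve, Set.range_comp, (mul_left_surjective₀ hω).range_comp]

end InnerProduct

/-- The orbit of a point under a continuous one-parameter group of isometries of
Euclidean 3-space is, up to an ambient isometry, a set
{(r·cos t, r·sin t, c·t) : t ∈ ℝ}: a point, a line, a circle or a cylindrical helix. -/
theorem orbit_one_parameter_isometry_group_R3
    (φ : ℝ → (EuclideanSpace ℝ (Fin 3) ≃ᵢ EuclideanSpace ℝ (Fin 3)))
    (h0 : φ 0 = IsometryEquiv.refl (EuclideanSpace ℝ (Fin 3)))
    (hadd : ∀ s t : ℝ, ∀ x : EuclideanSpace ℝ (Fin 3), φ (s + t) x = φ s (φ t x))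
    (hcont : Continuous fun p : ℝ × EuclideanSpace ℝ (Fin 3) => φ p.1 p.2) :
    ∀ x : EuclideanSpace ℝ (Fin 3), ∃ (r c : ℝ)
      (ψ : EuclideanSpace ℝ (Fin 3) ≃ᵢ EuclideanSpace ℝ (Fin 3)), 0 ≤ r ∧
      (Set.range fun t : ℝ => φ t x) =
        ψ '' (Set.range fun t : ℝ =>
          (WithLp.toLp 2 ![r * Real.cos t, r * Real.sin t, c * t] : EuclideanSpace ℝ (Fin 3))) := by
  intro x
  obtain ⟨K, v, hderiv⟩ := exists_hasDerivAt_flow h0 hadd hcont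
  obtain ⟨b, X₀, r, c, ω, hr, hω, hx, hscrew⟩ := exists_screwCurve_solution
    finrank_euclideanSpace_fin (inner_apply_self_eq_zero_of_isometry_flow h0 hderiv) x v
  have horbit : (fun t => φ t x) = screwCurve X₀ (r • b 0) (r • b 1) (c • b 2) ω :=
    ODE_solution_unique_affine K v (hderiv x) hscrew (by rw [hx, h0]; rfl)
  obtain ⟨ψ, hψ⟩ := exists_isometryEquiv_range_screwCurve_eq_image_range_helix b X₀ r c hω
  exact ⟨r, c / ω, ψ, hr, horbit ▸ hψ⟩
end

section
/- Let φ : ℝ → Isom(ℝ˛) be a one-parameter group of isometries of the Euclidean plane, i.e. φ(0) is the identity, φ(s + t) = φ(s) ∘ φ(t) for all s, t ∈ ℝ, and the map (t, x) ↦ φ(t)(x) is continuous. Then for every point x of the plane, the orbit {φ(t)(x) : t ∈ ℝ} is either a full circle about some center z — namely the set of all points at distance dist(x, z) from z — or a line through x, i.e. a set of the form {x + t·v : t ∈ ℝ} for some vector v (a single point when v = 0). -/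
/-!
Every isometry of `ℂ` is `z ↦ a * z + b` or `z ↦ a * conj z + b` with `|a| = 1`. Since
`φ t = φ (t / 2) ∘ φ (t / 2)`, only the first kind occurs, so `φ t z = a t * z + b t` where `a`
is a continuous homomorphism `ℝ → S¹`. If `a ≡ 1`, then `b` is continuous and additive, hence
linear, and the orbits are lines. Otherwise all `φ t` share a fixed point `z`; lifting `a` through
`t ↦ exp (i t)` shows `a t = exp (i c t)` with `c ≠ 0`, so `a` is onto and the orbits are the
circles about `z`.
-/

open Complex Set Metric Module ComplexConjugate

namespace Circle

theorem exists_eq_exp_mul_of_map_add {a : ℝ → Circle} (hcont : Continuous a)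
    (hadd : ∀ s t, a (s + t) = a s * a t) : ∃ c : ℝ, ∀ t, a t = exp (c * t) := by
  have ha0 : a 0 = 1 := by simpa using hadd 0 0
  obtain ⟨θ, ⟨-, hθ⟩, hθuniq⟩ := isCoveringMap_exp.existsUnique_continuousMap_lifts
    ⟨a, hcont⟩ 0 0 (by simp [ha0])
  have hθa : ∀ t, exp (θ t) = a t := fun t => congrFun hθ t
  -- `t ↦ θ (s + t) - θ s` is another lift of `a` vanishing at `0`.
  have hθadd : ∀ s t, θ (s + t) = θ s + θ t := by
    intro s t
    have hlift := hθuniq ⟨fun t => θ (s + t) - θ s, by fun_prop⟩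
      ⟨by simp, funext fun t => by simp [hθa, hadd]⟩
    have := congrFun (congrArg DFunLike.coe hlift) t
    simp only [ContinuousMap.coe_mk] at this
    linarith
  refine ⟨θ 1, fun t => ?_⟩
  have hlin := map_real_smul (AddMonoidHom.mk' θ hθadd) θ.continuous t 1
  simp only [AddMonoidHom.mk'_apply, smul_eq_mul, mul_one] at hlin
  rw [← hθa, hlin, mul_comm]

theorem surjective_of_map_add {a : ℝ → Circle} (hcont : Continuous a)
    (hadd : ∀ s t, a (s + t) = a s * a t) (hne : ∃ t, a t ≠ 1) : Function.Surjective a := by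
  obtain ⟨c, hc⟩ := exists_eq_exp_mul_of_map_add hcont hadd
  obtain ⟨t₀, ht₀⟩ := hne
  have hc0 : c ≠ 0 := by rintro rfl; simp [hc] at ht₀
  intro u
  obtain ⟨s, rfl⟩ := exp_surjective u
  exact ⟨s / c, by rw [hc, mul_div_cancel₀ s hc0]⟩

end Circle

section

variable {E F : Type*} [NormedAddCommGroup E] [NormedSpace ℝ E] [NormedAddCommGroup F]
  [NormedSpace ℝ F]

def IsCircleOrLineThrough (S : Set E) (x : E) : Prop :=
  (∃ z, S = sphere z (dist x z)) ∨ ∃ v, S = range fun t : ℝ => x + t • v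

theorem IsCircleOrLineThrough.image {S : Set E} {x : E} (h : IsCircleOrLineThrough S x)
    (e : E ≃ₗᵢ[ℝ] F) : IsCircleOrLineThrough (e '' S) (e x) := by
  rcases h with ⟨z, rfl⟩ | ⟨v, rfl⟩
  · refine Or.inl ⟨e z, ?_⟩
    rw [← e.coe_toIsometryEquiv, IsometryEquiv.image_sphere, IsometryEquiv.dist_eq]
  · refine Or.inr ⟨e v, ?_⟩
    rw [← range_comp]
    congr 1
    funext t
    simp

end

namespace Complex

theorem range_circle_mul_add (w z : ℂ) :
    (range fun u : Circle => (u : ℂ) * w + z) = sphere z ‖w‖ := by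
  refine Subset.antisymm ?_ fun p hp => ?_
  · rintro _ ⟨u, rfl⟩
    simp [Circle.norm_coe]
  rw [mem_sphere, dist_eq] at hp
  rcases eq_or_ne w 0 with rfl | hw
  · exact ⟨1, by simpa [sub_eq_zero, eq_comm] using hp⟩
  · refine ⟨⟨(p - z) / w, by simp [Submonoid.unitSphere, hp, hw]⟩, ?_⟩
    simp [div_mul_cancel₀ _ hw]

theorem exists_circle_eq_mul_add_or_eq_mul_conj_add (f : ℂ ≃ᵢ ℂ) :
    ∃ a : Circle, (∀ z, f z = a * z + f 0) ∨ ∀ z, f z = a * conj z + f 0 := by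
  have hf : ∀ z, f z = f.toRealLinearIsometryEquiv z + f 0 := fun z => by
    rw [IsometryEquiv.toRealLinearIsometryEquiv_apply, sub_add_cancel]
  obtain ⟨a, ha | ha⟩ := linear_isometry_complex f.toRealLinearIsometryEquiv
  · exact ⟨a, Or.inl fun z => by rw [hf, ha, rotation_apply]⟩
  · exact ⟨a, Or.inr fun z => by rw [hf, ha]; rfl⟩

-- A glide reflection squares to a translation, and a rotation to a rotation.
theorem exists_circle_eq_mul_add_of_eq_comp_self {f g : ℂ ≃ᵢ ℂ}
    (hfg : ∀ z, f z = g (g z)) :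
    ∃ a : Circle, ∀ z, f z = a * z + f 0 := by
  obtain ⟨a, hg | hg⟩ := exists_circle_eq_mul_add_or_eq_mul_conj_add g
  · refine ⟨a * a, fun z => ?_⟩
    rw [hfg, hfg, hg (g z), hg z, hg (g 0), hg 0, Circle.coe_mul]
    ring
  · refine ⟨1, fun z => ?_⟩
    have haa : (a : ℂ) * conj (a : ℂ) = 1 := by
      rw [← Circle.coe_inv_eq_conj, ← Circle.coe_mul, mul_inv_cancel, Circle.coe_one]
    rw [hfg, hfg, hg (g z), hg z, hg (g 0), hg 0]
    simp only [map_add, map_mul, conj_conj, Circle.coe_one, map_zero, mul_zero, zero_add]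
    linear_combination (z : ℂ) * haa

theorem isCircleOrLineThrough_range_mul_add {a : ℝ → Circle} {b : ℝ → ℂ}
    (ha : Continuous a) (ha_add : ∀ s t, a (s + t) = a s * a t) (hb : Continuous b)
    (hb_add : ∀ s t, b (s + t) = a s * b t + b s) (x : ℂ) :
    IsCircleOrLineThrough (range fun t => a t * x + b t) x := by
  by_cases h1 : ∀ t, a t = 1
  · have hb_add' : ∀ s t, b (s + t) = b s + b t := fun s t => by
      rw [hb_add, h1, Circle.coe_one, one_mul, add_comm]
    refine Or.inr ⟨b 1, congrArg range (funext fun t => ?_)⟩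
    have hlin := map_real_smul (AddMonoidHom.mk' b hb_add') hb t 1
    simp only [AddMonoidHom.mk'_apply, smul_eq_mul, mul_one] at hlin
    rw [h1, Circle.coe_one, one_mul, hlin]
  push Not at h1
  obtain ⟨t₀, ht₀⟩ := h1
  have hsub : (1 : ℂ) - a t₀ ≠ 0 := sub_ne_zero.2 fun h => ht₀ (Circle.coe_eq_one.1 h.symm)
  set z := b t₀ / (1 - a t₀)
  -- Expand `b (t₀ + t) = b (t + t₀)`; `z` is the common fixed point of the maps `a t * · + b t`.
  have hb_eq : ∀ t, b t = (1 - a t) * z := fun t => by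
    have h := hb_add t₀ t
    rw [add_comm, hb_add] at h
    rw [mul_div_assoc', eq_div_iff hsub]
    linear_combination h
  have hrange :
      (fun t => (a t : ℂ) * x + b t) = (fun u : Circle => (u : ℂ) * (x - z) + z) ∘ a := by
    funext t
    simp only [hb_eq, Function.comp_apply]
    ring
  refine Or.inl ⟨z, ?_⟩
  rw [hrange, range_comp, (Circle.surjective_of_map_add ha ha_add ⟨t₀, ht₀⟩).range_eq, image_univ,
    range_circle_mul_add, dist_eq]

theorem isCircleOrLineThrough_range_of_map_add (ψ : ℝ → ℂ ≃ᵢ ℂ)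
    (hadd : ∀ s t z, ψ (s + t) z = ψ s (ψ t z)) (hcont : ∀ z, Continuous fun t => ψ t z)
    (x : ℂ) :
    IsCircleOrLineThrough (range fun t => ψ t x) x := by
  have hsquare : ∀ t, ∃ a : Circle, ∀ z, ψ t z = a * z + ψ t 0 := fun t =>
    exists_circle_eq_mul_add_of_eq_comp_self fun z => by rw [← hadd, add_halves]
  choose a ha using hsquare
  have ha_coe : ∀ t, (a t : ℂ) = ψ t 1 - ψ t 0 := fun t => by rw [ha t 1]; ring
  have ha_add : ∀ s t, a (s + t) = a s * a t := fun s t => by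
    apply Circle.ext
    rw [Circle.coe_mul, ha_coe (s + t), ha_coe t, hadd, hadd, ha s (ψ t 1), ha s (ψ t 0)]
    ring
  have ha_cont : Continuous a :=
    continuous_induced_rng.2 <| ((hcont 1).sub (hcont 0)).congr fun t => (ha_coe t).symm
  have hb_add : ∀ s t, ψ (s + t) 0 = a s * ψ t 0 + ψ s 0 := fun s t => by rw [hadd, ha]
  have horbit : (fun t => ψ t x) = fun t => a t * x + ψ t 0 := funext fun t => ha t x
  rw [horbit]
  exact isCircleOrLineThrough_range_mul_add ha_cont ha_add (hcont 0) hb_add x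

end Complex

theorem isCircleOrLineThrough_range_of_finrank_eq_two {E : Type*} [NormedAddCommGroup E]
    [InnerProductSpace ℝ E] (hE : finrank ℝ E = 2) (φ : ℝ → E ≃ᵢ E)
    (hadd : ∀ s t x, φ (s + t) x = φ s (φ t x)) (hcont : ∀ x, Continuous fun t => φ t x)
    (x : E) :
    IsCircleOrLineThrough (range fun t => φ t x) x := by
  have : FiniteDimensional ℝ E := Module.finite_of_finrank_eq_succ hE
  let e := Complex.isometryOfOrthonormal ((stdOrthonormalBasis ℝ E).reindex (finCongr hE))
  let ψ : ℝ → ℂ ≃ᵢ ℂ := fun t =>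
    (e.toIsometryEquiv.trans (φ t)).trans e.symm.toIsometryEquiv
  have hψ := Complex.isCircleOrLineThrough_range_of_map_add ψ (fun s t z => by simp [ψ, hadd])
    (fun z => e.symm.continuous.comp (hcont (e z))) (e.symm x)
  convert hψ.image e using 1
  · rw [← range_comp]
    simp [ψ, Function.comp_def]
  · simp

theorem orbit_one_parameter_isometry_group_R2_general
    (φ : ℝ → (EuclideanSpace ℝ (Fin 2) ≃ᵢ EuclideanSpace ℝ (Fin 2)))
    (hadd : ∀ s t : ℝ, ∀ x : EuclideanSpace ℝ (Fin 2), φ (s + t) x = φ s (φ t x))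
    (hcont : Continuous fun p : ℝ × EuclideanSpace ℝ (Fin 2) => φ p.1 p.2) :
    ∀ x : EuclideanSpace ℝ (Fin 2),
      (∃ z : EuclideanSpace ℝ (Fin 2),
          (Set.range fun t : ℝ => φ t x) = Metric.sphere z (dist x z)) ∨
      (∃ v : EuclideanSpace ℝ (Fin 2),
          (Set.range fun t : ℝ => φ t x) = Set.range fun t : ℝ => x + t • v) :=
  isCircleOrLineThrough_range_of_finrank_eq_two finrank_euclideanSpace_fin φ hadd
    fun _ => hcont.comp (continuous_id.prodMk continuous_const)

/-- The orbit of a point under a continuous one-parameter group of isometries of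
the Euclidean plane is a full circle about some center, or a line through the
point (possibly degenerate to the point itself). -/
theorem orbit_one_parameter_isometry_group_R2
    (φ : ℝ → (EuclideanSpace ℝ (Fin 2) ≃ᵢ EuclideanSpace ℝ (Fin 2)))
    (h0 : φ 0 = IsometryEquiv.refl (EuclideanSpace ℝ (Fin 2)))
    (hadd : ∀ s t : ℝ, ∀ x : EuclideanSpace ℝ (Fin 2), φ (s + t) x = φ s (φ t x))
    (hcont : Continuous fun p : ℝ × EuclideanSpace ℝ (Fin 2) => φ p.1 p.2) :
    ∀ x : EuclideanSpace ℝ (Fin 2),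
      (∃ z : EuclideanSpace ℝ (Fin 2),
          (Set.range fun t : ℝ => φ t x) = Metric.sphere z (dist x z)) ∨
      (∃ v : EuclideanSpace ℝ (Fin 2),
          (Set.range fun t : ℝ => φ t x) = Set.range fun t : ℝ => x + t • v) :=
  orbit_one_parameter_isometry_group_R2_general φ hadd hcont
end
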